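/- arXiv:2507.02422 — 3 statements merged into one kernel-verified Lean document; each statement's English description precedes it below -/
import Mathlib

section
/- Let n, m ≥ 1, let H be a Hermitian complex matrix indexed by Fin n × Fin m, let f : ℝ → ℝ be a continuous convex function with f(0) = 0, and let a be an n×n complex matrix with Tr(a* a) ≤ 1. Then the matrix K := Tr₁((a* ⊗ 1) H (a ⊗ 1)) is Hermitian, and Tr f(K) ≤ Tr(a* · (Tr₂ f(H)) · a). -/
open Matrix
open scoped ComplexOrder

/-- The partial trace over the first factor: `(Tr₁ X)_{j,l} = ∑ᵢ X_{(i,j),(i,l)}`. -/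
noncomputable def ptrace1 {n m : ℕ} (X : Matrix (Fin n × Fin m) (Fin n × Fin m) ℂ) :
    Matrix (Fin m) (Fin m) ℂ :=
  Matrix.of fun j l => ∑ i : Fin n, X (i, j) (i, l)

/-- The partial trace over the second factor: `(Tr₂ X)_{i,k} = ∑ⱼ X_{(i,j),(k,j)}`. -/
noncomputable def ptrace2 {n m : ℕ} (X : Matrix (Fin n × Fin m) (Fin n × Fin m) ℂ) :
    Matrix (Fin n) (Fin n) ℂ :=
  Matrix.of fun i k => ∑ j : Fin m, X (i, j) (k, j)

/-- `a ⊗ 1`, with entries `(a ⊗ 1)_{(i,j),(k,l)} = a_{i,k} δ_{j,l}`. -/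
noncomputable def tensorOne {n m : ℕ} (a : Matrix (Fin n) (Fin n) ℂ) :
    Matrix (Fin n × Fin m) (Fin n × Fin m) ℂ :=
  Matrix.of fun p q => a p.1 q.1 * (if p.2 = q.2 then 1 else 0)

/-- `g` applied to a Hermitian matrix via the functional calculus
(`g(A) = ∑ᵢ g(λᵢ) Pᵢ` for the spectral decomposition `A = ∑ᵢ λᵢ Pᵢ`). -/
noncomputable def matFun {k : Type*} [Fintype k] [DecidableEq k]
    {A : Matrix k k ℂ} (hA : A.IsHermitian) (g : ℝ → ℝ) : Matrix k k ℂ := hA.cfc g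

/-!
Let `uⱼ` be an orthonormal eigenbasis of `K` with eigenvalues `μⱼ`, and let `Bⱼ` be the matrix
with columns `a eᵢ ⊗ uⱼ`. Then `μⱼ = Tr (Bⱼ* H Bⱼ)` and `Tr (Bⱼ* Bⱼ) = Tr (a* a) ≤ 1`. In an
eigenbasis of `H` this writes `μⱼ` as a combination of eigenvalues of `H` with nonnegative weights
of total mass at most `1`, so Jensen's inequality (the missing mass sits at `0`, where `f`
vanishes) gives `f μⱼ ≤ Tr (Bⱼ* f(H) Bⱼ)`. Summing over `j`, `∑ⱼ Bⱼ Bⱼ* = a a* ⊗ 1` turns the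
right-hand side into `Tr (a* Tr₂ f(H) a)`.
-/

theorem ConvexOn.map_sum_le_of_sum_le_one {𝕜 E β ι : Type*} [Field 𝕜] [LinearOrder 𝕜]
    [IsStrictOrderedRing 𝕜] [AddCommGroup E] [AddCommGroup β] [PartialOrder β]
    [IsOrderedAddMonoid β] [Module 𝕜 E] [Module 𝕜 β] [IsStrictOrderedModule 𝕜 β]
    {s : Set E} {f : E → β} {t : Finset ι} {w : ι → 𝕜} {p : ι → E}
    (hf : ConvexOn 𝕜 s f) (hs : (0 : E) ∈ s) (hf0 : f 0 = 0)
    (h₀ : ∀ i ∈ t, 0 ≤ w i) (h₁ : ∑ i ∈ t, w i ≤ 1) (hmem : ∀ i ∈ t, p i ∈ s) :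
    f (∑ i ∈ t, w i • p i) ≤ ∑ i ∈ t, w i • f (p i) := by
  simpa [hf0] using hf.map_add_sum_le h₀ (sub_add_cancel 1 _) hmem (sub_nonneg.2 h₁) hs

namespace Matrix

variable {n κ 𝕜 : Type*} [RCLike 𝕜] [Fintype n] [DecidableEq n] [Fintype κ]

theorem trace_conjTranspose_mul_diagonal_mul (C : Matrix n κ 𝕜) (d : n → 𝕜) :
    (Cᴴ * diagonal d * C).trace = ∑ r, d r * ∑ k, (‖C r k‖ ^ 2 : 𝕜) := by
  simp only [trace, diag, mul_apply (M := Cᴴ * diagonal d), mul_diagonal, conjTranspose_apply,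
    Finset.mul_sum]
  rw [Finset.sum_comm]
  refine Finset.sum_congr rfl fun r _ => Finset.sum_congr rfl fun k _ => ?_
  rw [← RCLike.conj_mul, RCLike.star_def]
  ring

namespace IsHermitian

variable {A : Matrix n n 𝕜} (hA : A.IsHermitian)

noncomputable def spectralWeight (B : Matrix n κ 𝕜) (r : n) : ℝ :=
  ∑ k, ‖((hA.eigenvectorUnitary : Matrix n n 𝕜)ᴴ * B) r k‖ ^ 2

theorem trace_conjTranspose_mul_cfc_mul (g : ℝ → ℝ) (B : Matrix n κ 𝕜) :
    (Bᴴ * hA.cfc g * B).trace =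
      ((∑ r, g (hA.eigenvalues r) * hA.spectralWeight B r : ℝ) : 𝕜) := by
  set U : Matrix n n 𝕜 := (hA.eigenvectorUnitary : Matrix n n 𝕜)
  -- the ascription on the diagonal keeps `*` off the `CStarMatrix` default instance
  have h : Bᴴ * hA.cfc g * B =
      (Uᴴ * B)ᴴ * diagonal (RCLike.ofReal ∘ g ∘ hA.eigenvalues : n → 𝕜) * (Uᴴ * B) := by
    rw [IsHermitian.cfc, Unitary.conjStarAlgAut_apply, conjTranspose_mul,
      conjTranspose_conjTranspose, star_eq_conjTranspose]
    simp only [U, Matrix.mul_assoc]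
  rw [h, trace_conjTranspose_mul_diagonal_mul]
  push_cast [spectralWeight]
  rfl

theorem sum_spectralWeight (B : Matrix n κ 𝕜) :
    ∑ r, hA.spectralWeight B r = RCLike.re (Bᴴ * B).trace := by
  set C : Matrix n κ 𝕜 := (hA.eigenvectorUnitary : Matrix n n 𝕜)ᴴ * B
  have h : Bᴴ * B = Cᴴ * diagonal (1 : n → 𝕜) * C := by
    rw [show diagonal (1 : n → 𝕜) = 1 from diagonal_one, Matrix.mul_one,
      conjTranspose_mul, conjTranspose_conjTranspose,
      Matrix.mul_assoc, ← Matrix.mul_assoc _ _ B, ← star_eq_conjTranspose,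
      Unitary.mul_star_self_of_mem (SetLike.coe_mem _), Matrix.one_mul]
  rw [h, trace_conjTranspose_mul_diagonal_mul]
  simp [spectralWeight, C]

theorem trace_cfc (g : ℝ → ℝ) : (hA.cfc g).trace = ∑ i, (g (hA.eigenvalues i) : 𝕜) := by
  rw [IsHermitian.cfc, Unitary.conjStarAlgAut_apply, trace_mul_cycle,
    Unitary.coe_star_mul_self, Matrix.one_mul, trace_diagonal]
  rfl

theorem map_re_trace_conjTranspose_mul_mul_le {f : ℝ → ℝ} (hf : ConvexOn ℝ Set.univ f)
    (hf0 : f 0 = 0) {B : Matrix n κ 𝕜} (hB : RCLike.re (Bᴴ * B).trace ≤ 1) :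
    f (RCLike.re (Bᴴ * A * B).trace) ≤ RCLike.re (Bᴴ * hA.cfc f * B).trace := by
  have hA_id : hA.cfc id = A := (hA.cfc_eq id).symm.trans (cfc_id ℝ A hA.isSelfAdjoint)
  conv_lhs => rw [← hA_id]
  rw [trace_conjTranspose_mul_cfc_mul, trace_conjTranspose_mul_cfc_mul, RCLike.ofReal_re,
    RCLike.ofReal_re]
  simp_rw [id, mul_comm _ (hA.spectralWeight B _), ← smul_eq_mul]
  refine hf.map_sum_le_of_sum_le_one (Set.mem_univ 0) hf0 (fun r _ => ?_) ?_ fun _ _ => trivial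
  · exact Finset.sum_nonneg fun _ _ => by positivity
  · rwa [sum_spectralWeight]

end IsHermitian

end Matrix

section PartialTrace

variable {n m : ℕ}

@[simp] lemma ptrace1_apply (X : Matrix (Fin n × Fin m) (Fin n × Fin m) ℂ) (j l : Fin m) :
    ptrace1 X j l = ∑ i, X (i, j) (i, l) := rfl

@[simp] lemma ptrace2_apply (X : Matrix (Fin n × Fin m) (Fin n × Fin m) ℂ) (i k : Fin n) :
    ptrace2 X i k = ∑ j, X (i, j) (k, j) := rfl

@[simp] lemma tensorOne_apply (a : Matrix (Fin n) (Fin n) ℂ) (p q : Fin n × Fin m) :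
    tensorOne a p q = a p.1 q.1 * if p.2 = q.2 then 1 else 0 := rfl

lemma tensorOne_conjTranspose (a : Matrix (Fin n) (Fin n) ℂ) :
    (tensorOne (m := m) a)ᴴ = tensorOne aᴴ := by
  ext p q
  by_cases h : p.2 = q.2 <;> simp [h, eq_comm]

lemma ptrace1_isHermitian {X : Matrix (Fin n × Fin m) (Fin n × Fin m) ℂ}
    (hX : X.IsHermitian) : (ptrace1 X).IsHermitian := by
  ext j l
  simp only [conjTranspose_apply, ptrace1_apply, star_sum]
  exact Finset.sum_congr rfl fun i _ => hX.apply _ _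

/-- `(a ⊗ 1)(1 ⊗ u)`, the matrix with columns `a eᵢ ⊗ u`. -/
noncomputable def tensorCol (a : Matrix (Fin n) (Fin n) ℂ) (u : Fin m → ℂ) :
    Matrix (Fin n × Fin m) (Fin n) ℂ :=
  of fun p i => a p.1 i * u p.2

@[simp] lemma tensorCol_apply (a : Matrix (Fin n) (Fin n) ℂ) (u : Fin m → ℂ)
    (p : Fin n × Fin m) (i : Fin n) : tensorCol a u p i = a p.1 i * u p.2 := rfl

lemma tensorOne_mul_tensorCol (a b : Matrix (Fin n) (Fin n) ℂ) (u : Fin m → ℂ) :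
    tensorOne (m := m) a * tensorCol b u = tensorCol (a * b) u := by
  ext p i
  simp [mul_apply, Fintype.sum_prod_type, Finset.sum_mul, mul_assoc]

lemma dotProduct_ptrace1_mulVec (X : Matrix (Fin n × Fin m) (Fin n × Fin m) ℂ)
    (u : Fin m → ℂ) :
    star u ⬝ᵥ ptrace1 X *ᵥ u =
      ((tensorCol (1 : Matrix (Fin n) (Fin n) ℂ) u)ᴴ * X *
        tensorCol (1 : Matrix (Fin n) (Fin n) ℂ) u).trace := by
  simp only [dotProduct, Pi.star_apply, RCLike.star_def, mulVec, ptrace1_apply, Finset.sum_mul,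
    Finset.mul_sum, trace, diag_apply, mul_apply, conjTranspose_apply, tensorCol_apply, one_apply,
    ite_mul, one_mul, zero_mul, apply_ite (starRingEnd ℂ), map_zero, Fintype.sum_prod_type,
    Finset.sum_ite_irrel, Finset.sum_const_zero, Finset.sum_ite_eq', Finset.mem_univ,
    ↓reduceIte, mul_ite, mul_zero]
  rw [Finset.sum_comm_cycle]
  exact Finset.sum_congr rfl fun i _ => Finset.sum_comm.trans (by simp only [mul_assoc])

lemma dotProduct_ptrace1_conj_mulVec (a : Matrix (Fin n) (Fin n) ℂ)
    (X : Matrix (Fin n × Fin m) (Fin n × Fin m) ℂ) (u : Fin m → ℂ) :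
    star u ⬝ᵥ ptrace1 (tensorOne aᴴ * X * tensorOne a) *ᵥ u =
      ((tensorCol a u)ᴴ * X * tensorCol a u).trace := by
  have h : tensorCol a u = tensorOne (m := m) a * tensorCol (1 : Matrix (Fin n) (Fin n) ℂ) u := by
    rw [tensorOne_mul_tensorCol, Matrix.mul_one]
  rw [dotProduct_ptrace1_mulVec, h, conjTranspose_mul, tensorOne_conjTranspose]
  simp only [Matrix.mul_assoc]

lemma trace_conjTranspose_tensorCol_mul_self (a : Matrix (Fin n) (Fin n) ℂ) (u : Fin m → ℂ) :
    ((tensorCol a u)ᴴ * tensorCol a u).trace = (aᴴ * a).trace * (star u ⬝ᵥ u) := by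
  simp only [trace, diag_apply, mul_apply, conjTranspose_apply, tensorCol_apply, dotProduct,
    Pi.star_apply, Fintype.sum_prod_type, Finset.sum_mul, Finset.mul_sum, star_mul']
  rw [Finset.sum_comm_cycle]
  exact Finset.sum_congr rfl fun l _ => Finset.sum_congr rfl fun i _ =>
    Finset.sum_congr rfl fun k _ => by ring

lemma sum_tensorCol_mul_conjTranspose (a : Matrix (Fin n) (Fin n) ℂ)
    {U : Matrix (Fin m) (Fin m) ℂ} (hU : U ∈ unitaryGroup (Fin m) ℂ) :
    ∑ j, tensorCol a (fun l => U l j) * (tensorCol a (fun l => U l j))ᴴ =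
      tensorOne (a * aᴴ) := by
  ext p q
  have hUU : (U * Uᴴ) p.2 q.2 = (1 : Matrix (Fin m) (Fin m) ℂ) p.2 q.2 := by
    rw [← star_eq_conjTranspose, Unitary.mul_star_self_of_mem hU]
  simp only [mul_apply, conjTranspose_apply, one_apply] at hUU
  simp only [Matrix.sum_apply, mul_apply, tensorCol_apply, conjTranspose_apply, tensorOne_apply,
    star_mul']
  rw [Finset.sum_comm]
  simp only [Finset.sum_mul, ← hUU]
  refine Finset.sum_congr rfl fun k _ => ?_
  rw [Finset.mul_sum]
  exact Finset.sum_congr rfl fun j _ => by ring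

lemma trace_mul_tensorOne (X : Matrix (Fin n × Fin m) (Fin n × Fin m) ℂ)
    (c : Matrix (Fin n) (Fin n) ℂ) :
    (X * tensorOne c).trace = (ptrace2 X * c).trace := by
  simp only [trace, diag_apply, mul_apply, tensorOne_apply, mul_ite, mul_one, mul_zero,
    Fintype.sum_prod_type, Finset.sum_ite_eq', Finset.mem_univ, ↓reduceIte, ptrace2_apply,
    Finset.sum_mul]
  exact Finset.sum_congr rfl fun _ _ => Finset.sum_comm

lemma trace_conjTranspose_mul_ptrace2_mul (a : Matrix (Fin n) (Fin n) ℂ)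
    {U : Matrix (Fin m) (Fin m) ℂ} (hU : U ∈ unitaryGroup (Fin m) ℂ)
    (X : Matrix (Fin n × Fin m) (Fin n × Fin m) ℂ) :
    (aᴴ * ptrace2 X * a).trace =
      ∑ j, ((tensorCol a (fun l => U l j))ᴴ * X * tensorCol a (fun l => U l j)).trace := by
  simp_rw [trace_mul_cycle _ X, ← trace_sum, ← Finset.sum_mul,
    sum_tensorCol_mul_conjTranspose a hU, trace_mul_comm _ X, trace_mul_tensorOne]
  rw [trace_mul_cycle, ← Matrix.mul_assoc, trace_mul_comm, Matrix.mul_assoc]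

end PartialTrace

theorem trace_jensen_partial_trace_contractive_general {n m : ℕ}
    {H : Matrix (Fin n × Fin m) (Fin n × Fin m) ℂ} (hH : H.IsHermitian)
    (f : ℝ → ℝ) (hconv : ConvexOn ℝ Set.univ f) (hf0 : f 0 = 0)
    (a : Matrix (Fin n) (Fin n) ℂ) (ha : (aᴴ * a).trace ≤ 1) :
    ∃ hK : (ptrace1 (tensorOne aᴴ * H * tensorOne a)).IsHermitian,
      (matFun hK f).trace ≤ (aᴴ * ptrace2 (matFun hH f) * a).trace := by
  have hK : (ptrace1 (tensorOne aᴴ * H * tensorOne a)).IsHermitian := by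
    refine ptrace1_isHermitian ?_
    simpa [tensorOne_conjTranspose] using isHermitian_conjTranspose_mul_mul (tensorOne a) hH
  refine ⟨hK, ?_⟩
  let B (j : Fin m) := tensorCol a ⇑(hK.eigenvectorBasis j)
  have hB (j : Fin m) : ((B j)ᴴ * B j).trace.re ≤ 1 := by
    have hunit : star ⇑(hK.eigenvectorBasis j) ⬝ᵥ ⇑(hK.eigenvectorBasis j) = 1 := by
      rw [dotProduct_comm, ← EuclideanSpace.inner_eq_star_dotProduct, inner_self_eq_norm_sq_to_K,
        hK.eigenvectorBasis.orthonormal.1 j]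
      simp
    rw [trace_conjTranspose_tensorCol_mul_self, hunit, mul_one]
    exact (Complex.le_def.1 ha).1
  have hμ (j : Fin m) : hK.eigenvalues j = ((B j)ᴴ * H * B j).trace.re := by
    rw [hK.eigenvalues_eq j, dotProduct_ptrace1_conj_mulVec]
    rfl
  calc (matFun hK f).trace = ∑ j, (f (hK.eigenvalues j) : ℂ) := hK.trace_cfc f
    _ ≤ ∑ j, ((B j)ᴴ * matFun hH f * B j).trace := Finset.sum_le_sum fun j _ => by
        refine Complex.le_def.2 ⟨?_, ?_⟩
        · simpa [hμ j, matFun] using hH.map_re_trace_conjTranspose_mul_mul_le hconv hf0 (hB j)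
        · simp [matFun, hH.trace_conjTranspose_mul_cfc_mul]
    _ = (aᴴ * ptrace2 (matFun hH f) * a).trace :=
        (trace_conjTranspose_mul_ptrace2_mul a hK.eigenvectorUnitary.2 _).symm

/-- **Jensen's inequality for partial traces (subnormalized case).**
For `n, m ≥ 1`, a Hermitian `H` on `ℂⁿ ⊗ ℂᵐ`, a continuous convex `f : ℝ → ℝ` with `f(0) = 0`
and an `n×n` matrix `a` with `Tr(a* a) ≤ 1`, the matrix `K = Tr₁((a* ⊗ 1) H (a ⊗ 1))` is
Hermitian and `Tr f(K) ≤ Tr(a* · (Tr₂ f(H)) · a)`. -/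
theorem trace_jensen_partial_trace_contractive {n m : ℕ} (hn : 1 ≤ n) (hm : 1 ≤ m)
    {H : Matrix (Fin n × Fin m) (Fin n × Fin m) ℂ} (hH : H.IsHermitian)
    (f : ℝ → ℝ) (hf : Continuous f) (hconv : ConvexOn ℝ Set.univ f) (hf0 : f 0 = 0)
    (a : Matrix (Fin n) (Fin n) ℂ) (ha : (aᴴ * a).trace ≤ 1) :
    ∃ hK : (ptrace1 (tensorOne aᴴ * H * tensorOne a)).IsHermitian,
      (matFun hK f).trace ≤ (aᴴ * ptrace2 (matFun hH f) * a).trace :=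
  trace_jensen_partial_trace_contractive_general hH f hconv hf0 a ha
end

section
/- Let H be a complex Hilbert space, let Φ : B(H) → B(H) be a positive linear map with Φ(1) ≤ 1 (a contractive positive map), let x ∈ B(H) be selfadjoint, let f : ℝ → ℝ be continuous and convex with f(0) = 0, and let ξ ∈ H be a unit vector. Then f(Re⟨Φ(x)ξ, ξ⟩) ≤ Re⟨Φ(f(x))ξ, ξ⟩, where f(x) denotes the continuous functional calculus of f applied to x. -/
/-!
Let `ω = Re⟨Φ(·)ξ, ξ⟩`, a monotone real-linear functional with `ω 1 ≤ 1`, and take a supporting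
line `t ↦ a t + b` of `f` at `ω x`. Functional calculus turns `a t + b ≤ f t` into
`a x + b ≤ f(x)`, and `f 0 = 0` forces `b ≤ 0`, so
`f (ω x) = a ω(x) + b ≤ a ω(x) + b ω(1) = ω(a x + b) ≤ ω(f(x))`.
-/

open Set

lemma ConvexOn.add_rightDeriv_mul_sub_le {S : Set ℝ} {f : ℝ → ℝ} (hf : ConvexOn ℝ S f)
    {t₀ t : ℝ} (ht₀ : t₀ ∈ interior S) (ht : t ∈ S) :
    f t₀ + derivWithin f (Ioi t₀) t₀ * (t - t₀) ≤ f t := by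
  rcases lt_trichotomy t t₀ with h | rfl | h
  · have hslope : slope f t t₀ ≤ derivWithin f (Ioi t₀) t₀ :=
      (hf.slope_le_leftDeriv_of_mem_interior ht ht₀ h).trans
        (hf.leftDeriv_le_rightDeriv_of_mem_interior ht₀)
    rw [slope_def_field, div_le_iff₀ (sub_pos.mpr h)] at hslope
    linarith
  · simp
  · have hslope : derivWithin f (Ioi t₀) t₀ ≤ slope f t₀ t :=
      hf.rightDeriv_le_slope_of_mem_interior ht₀ ht h
    rw [slope_def_field, le_div_iff₀ (sub_pos.mpr h)] at hslope
    linarith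

section FunctionalCalculus

variable {A : Type*} [Ring A] [StarRing A] [TopologicalSpace A] [Algebra ℝ A]
  [ContinuousFunctionalCalculus ℝ A IsSelfAdjoint]

lemma cfc_const_mul_id_add_const {x : A} (hx : IsSelfAdjoint x) (a b : ℝ) :
    cfc (fun t : ℝ => a * t + b) x = a • x + algebraMap ℝ A b := by
  rw [cfc_add x (fun t : ℝ => a * t) (fun _ : ℝ => b), cfc_const_mul a (fun t : ℝ => t) x,
    cfc_id' ℝ x, cfc_const b x]

theorem ConvexOn.map_apply_le_apply_cfc [PartialOrder A] [StarOrderedRing A]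
    (ω : A →ₗ[ℝ] ℝ) (hω : Monotone ω) (hω1 : ω 1 ≤ 1)
    {f : ℝ → ℝ} (hf : ConvexOn ℝ univ f) (hf0 : f 0 = 0) {x : A} (hx : IsSelfAdjoint x) :
    f (ω x) ≤ ω (cfc f x) := by
  set a := derivWithin f (Ioi (ω x)) (ω x)
  set b := f (ω x) - a * ω x
  have hline : ∀ t, a * t + b ≤ f t := fun t => by
    have := hf.add_rightDeriv_mul_sub_le (t₀ := ω x) (by simp) (mem_univ t)
    linarith
  have hb : b ≤ 0 := by simpa [hf0] using hline 0
  have hcont : Continuous f := continuousOn_univ.mp (hf.continuousOn isOpen_univ)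
  have hop : a • x + algebraMap ℝ A b ≤ cfc f x := by
    rw [← cfc_const_mul_id_add_const hx]
    exact cfc_mono fun t _ => hline t
  calc f (ω x) = a * ω x + b := by ring
    _ ≤ a * ω x + b * ω 1 := by nlinarith
    _ = ω (a • x + algebraMap ℝ A b) := by
      rw [Algebra.algebraMap_eq_smul_one, map_add, map_smul, map_smul, smul_eq_mul, smul_eq_mul]
    _ ≤ ω (cfc f x) := hω hop

end FunctionalCalculus

namespace ContinuousLinearMap

variable {H : Type*} [NormedAddCommGroup H] [InnerProductSpace ℂ H]

noncomputable def reInnerApplyₗ (ξ : H) : (H →L[ℂ] H) →ₗ[ℝ] ℝ where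
  toFun T := (inner ℂ (T ξ) ξ).re
  map_add' S T := by simp
  map_smul' r T := by simp

lemma monotone_reInnerApplyₗ (ξ : H) : Monotone (reInnerApplyₗ ξ) := fun S T hST => by
  have := ((le_def S T).mp hST).re_inner_nonneg_left ξ
  simpa [reInnerApplyₗ, inner_sub_left] using this

lemma reInnerApplyₗ_one {ξ : H} (hξ : ‖ξ‖ = 1) : reInnerApplyₗ ξ 1 = 1 := by
  simp [reInnerApplyₗ, inner_self_eq_norm_sq_to_K, hξ]

end ContinuousLinearMap

theorem jensen_vector_state_contractive_positive_map_general
    {H : Type*} [NormedAddCommGroup H] [InnerProductSpace ℂ H] [CompleteSpace H]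
    (Φ : (H →L[ℂ] H) →ₗ[ℂ] (H →L[ℂ] H))
    (hΦpos : ∀ y : H →L[ℂ] H, y.IsPositive → (Φ y).IsPositive)
    (hΦ1 : (1 - Φ 1).IsPositive)
    {x : H →L[ℂ] H} (hx : IsSelfAdjoint x)
    (f : ℝ → ℝ) (hconv : ConvexOn ℝ Set.univ f) (hf0 : f 0 = 0)
    (ξ : H) (hξ : ‖ξ‖ = 1) :
    f (Complex.re (inner ℂ ((Φ x) ξ) ξ)) ≤ Complex.re (inner ℂ ((Φ (cfc f x)) ξ) ξ) := by
  have hΦ : Monotone Φ := fun y z hyz => by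
    rw [ContinuousLinearMap.le_def, ← map_sub]
    exact hΦpos _ hyz
  have hstate := ContinuousLinearMap.monotone_reInnerApplyₗ ξ
  let ω := ContinuousLinearMap.reInnerApplyₗ ξ ∘ₗ Φ.restrictScalars ℝ
  have hω1 : ω 1 ≤ 1 := by
    rw [← ContinuousLinearMap.reInnerApplyₗ_one hξ]
    exact hstate ((ContinuousLinearMap.le_def _ _).mpr hΦ1)
  exact hconv.map_apply_le_apply_cfc ω (hstate.comp hΦ) hω1 hf0 hx

/-- **Vector-state Jensen inequality for contractive positive maps on `B(H)`.**
If `Φ : B(H) → B(H)` is a positive linear map with `Φ(1) ≤ 1` (i.e. `1 - Φ(1)` is a positive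
operator), `x` is selfadjoint, `f : ℝ → ℝ` is continuous and convex with `f(0) = 0`, and `ξ`
is a unit vector, then `f(Re⟨Φ(x)ξ, ξ⟩) ≤ Re⟨Φ(f(x))ξ, ξ⟩`, where `f(x)` is given by the
continuous functional calculus. -/
theorem jensen_vector_state_contractive_positive_map
    {H : Type*} [NormedAddCommGroup H] [InnerProductSpace ℂ H] [CompleteSpace H]
    (Φ : (H →L[ℂ] H) →ₗ[ℂ] (H →L[ℂ] H))
    (hΦpos : ∀ y : H →L[ℂ] H, y.IsPositive → (Φ y).IsPositive)
    (hΦ1 : (1 - Φ 1).IsPositive)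
    {x : H →L[ℂ] H} (hx : IsSelfAdjoint x)
    (f : ℝ → ℝ) (hf : Continuous f) (hconv : ConvexOn ℝ Set.univ f) (hf0 : f 0 = 0)
    (ξ : H) (hξ : ‖ξ‖ = 1) :
    f (Complex.re (inner ℂ ((Φ x) ξ) ξ)) ≤ Complex.re (inner ℂ ((Φ (cfc f x)) ξ) ξ) :=
  jensen_vector_state_contractive_positive_map_general Φ hΦpos hΦ1 hx f hconv hf0 ξ hξ
end

section
/- Let n, m ≥ 1, let d₁ be an n×n and d₂ an m×m positive definite complex matrix each of trace 1 (defining faithful states ρ₁(y) = Tr(d₁ y) and ρ₂(z) = Tr(d₂ z)), let a be an n×n complex matrix with a* a ≤ 1, let I ⊆ ℝ be an interval with 0 ∈ I, and let f : ℝ → ℝ be operator convex on I with f(0) ≤ 0, i.e. for every k ≥ 1, all Hermitian k×k matrices u, v with eigenvalues in I, and every t ∈ [0,1], one has f(t·u + (1−t)·v) ≤ t·f(u) + (1−t)·f(v) in the Loewner order. Let H be a Hermitian matrix indexed by Fin n × Fin m with all eigenvalues in I. Then the matrix K := Tr₁((d₁ ⊗ 1)(a* ⊗ 1) H (a ⊗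 1)) is Hermitian with all eigenvalues in I, and Tr(d₂ · f(K)) ≤ Tr(d₁ · a* · Tr₂((1 ⊗ d₂) f(H)) · a). -/
open Matrix
open scoped ComplexOrder

/-- `1 ⊗ b`, with entries `(1 ⊗ b)_{(i,j),(k,l)} = δ_{i,k} b_{j,l}`. -/
noncomputable def oneTensor {n m : ℕ} (b : Matrix (Fin m) (Fin m) ℂ) :
    Matrix (Fin n × Fin m) (Fin n × Fin m) ℂ :=
  Matrix.of fun p q => (if p.1 = q.1 then 1 else 0) * b p.2 q.2

/-!
Write `d₁ = Cᴴ C` and `g = a Cᴴ`, so that `g gᴴ = a d₁ aᴴ`. Then `K = ∑ₖ Vₖᴴ H Vₖ` with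
`Vₖ y = g eₖ ⊗ y`; stacking the `Vₖ` into one `V` gives `K = Vᴴ (H ⊗ 1) V` with
`Vᴴ V = Tr(a d₁ aᴴ) • 1 ≤ Tr(d₁) • 1 = 1`. For a contraction `V`, Jensen's operator inequality
`f(Vᴴ X V) ≤ Vᴴ f(X) V` holds (Hansen–Pedersen): dilate `V` to the isometry `W = (V; T)`,
`Tᴴ T = 1 - Vᴴ V`, and `X` to `Y = X ⊕ 0`; the midpoint `M` of `Y` and `S Y S`, where
`S = 1 - 2 W Wᴴ` is the symmetry reflecting the range of `W`, satisfies `M W = W (Wᴴ Y W)`, so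
operator convexity at `t = 1/2` compressed by `W` gives `f(Wᴴ Y W) ≤ Wᴴ f(Y) W`, and
`Wᴴ f(Y) W = Vᴴ f(X) V + f(0) Tᴴ T ≤ Vᴴ f(X) V`. Pairing `f(K) ≤ Vᴴ (f(H) ⊗ 1) V` with `d₂` and
unwinding the partial traces gives the trace inequality.

Matrix functions are compared through interpolating polynomials: `A C = C B` implies
`p(A) C = C p(B)`, hence `f(A) C = C f(B)`.
-/

open Polynomial
open scoped Kronecker

theorem Polynomial.exists_eval_eq_of_finite {s : Set ℝ} (hs : s.Finite) (g : ℝ → ℝ) :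
    ∃ p : ℝ[X], ∀ x ∈ s, p.eval x = g x := by
  classical
  exact ⟨Lagrange.interpolate hs.toFinset id g, fun x hx =>
    Lagrange.eval_interpolate_at_node g (Set.injOn_id _) (hs.mem_toFinset.2 hx)⟩

theorem Set.OrdConnected.exists_Icc_subset {I : Set ℝ} (hI : I.OrdConnected) (h0 : (0 : ℝ) ∈ I)
    {s : Set ℝ} (hs : s.Finite) (hsI : s ⊆ I) :
    ∃ α β : ℝ, α ≤ 0 ∧ 0 ≤ β ∧ s ⊆ Set.Icc α β ∧ Set.Icc α β ⊆ I := by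
  classical
  set t := insert 0 hs.toFinset
  have ht : t.Nonempty := Finset.insert_nonempty _ _
  have htI : ∀ x ∈ t, x ∈ I := by
    simpa [t, Finset.forall_mem_insert] using ⟨h0, fun x hx => hsI hx⟩
  refine ⟨t.min' ht, t.max' ht, t.min'_le 0 (Finset.mem_insert_self _ _),
    t.le_max' 0 (Finset.mem_insert_self _ _), fun x hx => ?_,
    hI.out (htI _ (t.min'_mem ht)) (htI _ (t.max'_mem ht))⟩
  have hxt : x ∈ t := Finset.mem_insert_of_mem (hs.mem_toFinset.2 hx)
  exact ⟨t.min'_le x hxt, t.le_max' x hxt⟩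

theorem Matrix.IsHermitian.kronecker_one {ι κ : Type*} [DecidableEq κ] {A : Matrix ι ι ℂ}
    (hA : A.IsHermitian) : (A ⊗ₖ (1 : Matrix κ κ ℂ)).IsHermitian := by
  simp [IsHermitian, conjTranspose_kronecker, hA.eq]

section

variable {ι κ : Type*} [Fintype ι] [DecidableEq ι] [Fintype κ] [DecidableEq κ]

namespace Matrix

theorem aeval_mul_eq_mul_aeval {A : Matrix ι ι ℂ} {B : Matrix κ κ ℂ} {C : Matrix ι κ ℂ}
    (h : A * C = C * B) (p : ℝ[X]) : aeval A p * C = C * aeval B p := by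
  have hpow : ∀ k : ℕ, A ^ k * C = C * B ^ k := by
    intro k
    induction k with
    | zero => simp
    | succ k ih => rw [pow_succ, pow_succ, Matrix.mul_assoc, h, ← Matrix.mul_assoc, ih,
        Matrix.mul_assoc]
  simp only [aeval_eq_sum_range, Matrix.sum_mul, Matrix.mul_sum, Matrix.smul_mul,
    Matrix.mul_smul, hpow]

theorem IsHermitian.cfc_eq_aeval {A : Matrix ι ι ℂ} (hA : A.IsHermitian) {g : ℝ → ℝ}
    {p : ℝ[X]} (hp : ∀ x ∈ spectrum ℝ A, p.eval x = g x) : cfc g A = aeval A p :=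
  (cfc_congr fun x hx => (hp x hx).symm).trans (cfc_polynomial p A hA)

theorem cfc_mul_eq_mul_cfc {A : Matrix ι ι ℂ} {B : Matrix κ κ ℂ} (hA : A.IsHermitian)
    (hB : B.IsHermitian) {C : Matrix ι κ ℂ} (h : A * C = C * B) (g : ℝ → ℝ) :
    cfc g A * C = C * cfc g B := by
  obtain ⟨p, hp⟩ :=
    exists_eval_eq_of_finite (A.finite_real_spectrum.union B.finite_real_spectrum) g
  rw [hA.cfc_eq_aeval fun x hx => hp x (Or.inl hx),
    hB.cfc_eq_aeval fun x hx => hp x (Or.inr hx), aeval_mul_eq_mul_aeval h]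

theorem map_cfc_of_isHermitian {F : Type*} [FunLike F (Matrix ι ι ℂ) (Matrix κ κ ℂ)]
    [AlgHomClass F ℝ (Matrix ι ι ℂ) (Matrix κ κ ℂ)] (φ : F) {A : Matrix ι ι ℂ}
    (hA : A.IsHermitian) (hφA : (φ A).IsHermitian) (g : ℝ → ℝ) :
    φ (cfc g A) = cfc g (φ A) := by
  obtain ⟨p, hp⟩ := exists_eval_eq_of_finite A.finite_real_spectrum g
  rw [hA.cfc_eq_aeval hp,
    hφA.cfc_eq_aeval fun x hx => hp x (AlgHom.spectrum_apply_subset φ A hx), aeval_algHom_apply]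

theorem spectrum_conj_of_involution {S : Matrix ι ι ℂ} (hSH : Sᴴ = S) (hSS : S * S = 1)
    (Y : Matrix ι ι ℂ) : spectrum ℝ (S * Y * S) = spectrum ℝ Y := by
  have hU : S ∈ unitary (Matrix ι ι ℂ) := by
    rw [Unitary.mem_iff, star_eq_conjTranspose, hSH, hSS]
    exact ⟨rfl, rfl⟩
  have h := Unitary.spectrum_star_right_conjugate (R := ℝ) (a := Y) (U := ⟨S, hU⟩)
  change spectrum ℝ (S * Y * Sᴴ) = _ at h
  rwa [hSH] at h

theorem cfc_conj_of_involution {S Y : Matrix ι ι ℂ} (hSH : Sᴴ = S) (hSS : S * S = 1)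
    (hY : Y.IsHermitian) (g : ℝ → ℝ) : cfc g (S * Y * S) = S * cfc g Y * S := by
  have hSY : (S * Y * S).IsHermitian := by
    simpa [hSH] using isHermitian_conjTranspose_mul_mul S hY
  have h := cfc_mul_eq_mul_cfc hSY hY (C := S) (by rw [Matrix.mul_assoc, hSS, Matrix.mul_one]) g
  rw [← h, Matrix.mul_assoc (cfc g _), hSS, Matrix.mul_one]

theorem spectrum_fromBlocks_zero (A : Matrix ι ι ℂ) (D : Matrix κ κ ℂ) :
    spectrum ℝ (fromBlocks A 0 0 D) = spectrum ℝ A ∪ spectrum ℝ D := by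
  ext r
  have h : algebraMap ℝ _ r - fromBlocks A 0 0 D
      = fromBlocks (algebraMap ℝ _ r - A) 0 0 (algebraMap ℝ (Matrix κ κ ℂ) r - D) := by
    simp only [Algebra.algebraMap_eq_smul_one, ← fromBlocks_one, fromBlocks_smul, sub_eq_add_neg,
      fromBlocks_neg, fromBlocks_add]
    simp
  simp only [spectrum.mem_iff, h, isUnit_fromBlocks_zero₂₁, Set.mem_union, not_and_or]

theorem spectrum_zero_subset : spectrum ℝ (0 : Matrix ι ι ℂ) ⊆ {0} := by
  intro r hr
  by_contra h
  exact spectrum.mem_iff.1 hr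
    (by simpa using (IsUnit.mk0 r h).map (algebraMap ℝ (Matrix ι ι ℂ)))

theorem cfc_fromBlocks_zero {A : Matrix ι ι ℂ} {D : Matrix κ κ ℂ} (hA : A.IsHermitian)
    (hD : D.IsHermitian) (g : ℝ → ℝ) :
    cfc g (fromBlocks A 0 0 D) = fromBlocks (cfc g A) 0 0 (cfc g D) := by
  have hY : (fromBlocks A 0 0 D).IsHermitian := by
    simp [IsHermitian, fromBlocks_conjTranspose, hA.eq, hD.eq]
  have h₁ := cfc_mul_eq_mul_cfc hY hA (C := fromRows 1 0) (by simp [fromBlocks_mul_fromRows]) g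
  have h₂ := cfc_mul_eq_mul_cfc hY hD (C := fromRows 0 1) (by simp [fromBlocks_mul_fromRows]) g
  calc cfc g (fromBlocks A 0 0 D)
      = cfc g (fromBlocks A 0 0 D) * fromCols (fromRows 1 0) (fromRows 0 1) := by
        simp [fromBlocks_one]
    _ = fromBlocks (cfc g A) 0 0 (cfc g D) := by
        rw [mul_fromCols, h₁, h₂]
        simp [fromRows_mul]

variable (ι κ) in
def kroneckerOneAlgHom : Matrix ι ι ℂ →ₐ[ℝ] Matrix (ι × κ) (ι × κ) ℂ where
  toFun A := A ⊗ₖ 1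
  map_one' := one_kronecker_one
  map_mul' A B := by rw [← mul_kronecker_mul, Matrix.one_mul]
  map_zero' := zero_kronecker _
  map_add' A B := add_kronecker A B 1
  commutes' r := by simp [Algebra.algebraMap_eq_smul_one, smul_kronecker]

theorem spectrum_kronecker_one_subset (A : Matrix ι ι ℂ) :
    spectrum ℝ (A ⊗ₖ (1 : Matrix κ κ ℂ)) ⊆ spectrum ℝ A :=
  AlgHom.spectrum_apply_subset (kroneckerOneAlgHom ι κ) A

theorem IsHermitian.cfc_kronecker_one {A : Matrix ι ι ℂ} (hA : A.IsHermitian) (g : ℝ → ℝ) :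
    cfc g (A ⊗ₖ (1 : Matrix κ κ ℂ)) = cfc g A ⊗ₖ 1 :=
  (map_cfc_of_isHermitian (kroneckerOneAlgHom ι κ) hA hA.kronecker_one g).symm

theorem IsHermitian.matFun_eq_cfc {A : Matrix ι ι ℂ} (hA : A.IsHermitian) (g : ℝ → ℝ) :
    matFun hA g = cfc g A :=
  (hA.cfc_eq g).symm

theorem IsHermitian.forall_eigenvalues_mem_iff {A : Matrix ι ι ℂ} (hA : A.IsHermitian)
    {I : Set ℝ} : (∀ i, hA.eigenvalues i ∈ I) ↔ spectrum ℝ A ⊆ I := by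
  rw [hA.spectrum_real_eq_range_eigenvalues, Set.range_subset_iff]

theorem PosSemidef.trace_mul_nonneg {A B : Matrix ι ι ℂ} (hA : A.PosSemidef)
    (hB : B.PosSemidef) : 0 ≤ (A * B).trace := by
  obtain ⟨C, rfl⟩ : ∃ C : Matrix ι ι ℂ, A = Cᴴ * C := by
    open scoped MatrixOrder in exact CStarAlgebra.nonneg_iff_eq_star_mul_self.mp hA.nonneg
  rw [Matrix.mul_assoc, trace_mul_comm]
  simpa [Matrix.mul_assoc] using (hB.mul_mul_conjTranspose_same C).trace_nonneg

theorem PosSemidef.trace_mul_le_trace_mul {D A B : Matrix ι ι ℂ} (hD : D.PosSemidef)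
    (hAB : (B - A).PosSemidef) : (D * A).trace ≤ (D * B).trace := by
  simpa [Matrix.mul_sub, trace_sub] using hD.trace_mul_nonneg hAB

theorem PosSemidef.trace_mul_mul_conjTranspose_le {D : Matrix ι ι ℂ} (hD : D.PosSemidef)
    {A : Matrix ι ι ℂ} (hA : (1 - Aᴴ * A).PosSemidef) : (A * D * Aᴴ).trace ≤ D.trace := by
  simpa [Matrix.sub_mul, trace_sub, trace_mul_cycle A D Aᴴ] using hA.trace_mul_nonneg hD

open scoped MatrixOrder in
theorem spectrum_conjTranspose_mul_mul_subset_Icc {X : Matrix ι ι ℂ} (hX : X.IsHermitian)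
    {α β : ℝ} (hα : α ≤ 0) (hβ : 0 ≤ β) (hXI : spectrum ℝ X ⊆ Set.Icc α β)
    {V : Matrix ι κ ℂ} (hV : (1 - Vᴴ * V).PosSemidef) :
    spectrum ℝ (Vᴴ * X * V) ⊆ Set.Icc α β := by
  have hK : IsSelfAdjoint (Vᴴ * X * V) := isHermitian_conjTranspose_mul_mul V hX
  have hα' := le_iff.1 <| (algebraMap_le_iff_le_spectrum (a := X) hX).2 fun x hx => (hXI hx).1
  have hβ' := le_iff.1 <| (le_algebraMap_iff_spectrum_le (a := X) hX).2 fun x hx => (hXI hx).2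
  intro x hx
  refine ⟨(algebraMap_le_iff_le_spectrum hK).1 ?_ x hx,
    (le_algebraMap_iff_spectrum_le hK).1 ?_ x hx⟩
  · rw [le_iff]
    convert (hα'.conjTranspose_mul_mul_same V).add (hV.smul (neg_nonneg.2 hα)) using 1
    simp only [Algebra.algebraMap_eq_smul_one, Matrix.mul_sub, Matrix.sub_mul, Matrix.mul_smul,
      Matrix.smul_mul, Matrix.mul_one]
    module
  · rw [le_iff]
    convert (hβ'.conjTranspose_mul_mul_same V).add (hV.smul hβ) using 1
    simp only [Algebra.algebraMap_eq_smul_one, Matrix.mul_sub, Matrix.sub_mul, Matrix.mul_smul,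
      Matrix.smul_mul, Matrix.mul_one]
    module

end Matrix

open Matrix

def OperatorConvexOn (I : Set ℝ) (f : ℝ → ℝ) : Prop :=
  ∀ (k : ℕ), 1 ≤ k → ∀ {u v : Matrix (Fin k) (Fin k) ℂ}
    (hu : u.IsHermitian) (hv : v.IsHermitian),
    (∀ i, hu.eigenvalues i ∈ I) → (∀ i, hv.eigenvalues i ∈ I) →
    ∀ t : ℝ, t ∈ Set.Icc (0 : ℝ) 1 → ∀ (huv : (t • u + (1 - t) • v).IsHermitian),
      (t • matFun hu f + (1 - t) • matFun hv f - matFun huv f).PosSemidef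

namespace OperatorConvexOn

variable {I : Set ℝ} {f : ℝ → ℝ}

theorem posSemidef_smul_cfc_add_smul_cfc_sub_cfc (hf : OperatorConvexOn I f)
    {u v : Matrix ι ι ℂ} (hu : u.IsHermitian) (hv : v.IsHermitian) (huI : spectrum ℝ u ⊆ I)
    (hvI : spectrum ℝ v ⊆ I) {t : ℝ} (ht : t ∈ Set.Icc (0 : ℝ) 1) :
    (t • cfc f u + (1 - t) • cfc f v - cfc f (t • u + (1 - t) • v)).PosSemidef := by
  rcases isEmpty_or_nonempty ι with hι | hι
  · rw [Subsingleton.elim (t • cfc f u + (1 - t) • cfc f v - cfc f (t • u + (1 - t) • v)) 0]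
    exact PosSemidef.zero
  let φ := reindexAlgEquiv ℝ ℂ (Fintype.equivFin ι)
  have hφ : ∀ {A : Matrix ι ι ℂ}, A.IsHermitian → (φ A).IsHermitian := fun hA => hA.submatrix _
  have huv : (t • u + (1 - t) • v).IsHermitian :=
    (hu.smul (IsSelfAdjoint.all t)).add (hv.smul (IsSelfAdjoint.all _))
  have key := hf _ Fintype.card_pos (hφ hu) (hφ hv)
    ((hφ hu).forall_eigenvalues_mem_iff.2 ((AlgEquiv.spectrum_eq φ u).symm ▸ huI))
    ((hφ hv).forall_eigenvalues_mem_iff.2 ((AlgEquiv.spectrum_eq φ v).symm ▸ hvI)) t ht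
    (by simpa only [map_add, map_smul] using hφ huv)
  simp only [IsHermitian.matFun_eq_cfc, ← map_smul φ, ← map_add φ] at key
  rw [← map_cfc_of_isHermitian φ hu (hφ hu), ← map_cfc_of_isHermitian φ hv (hφ hv),
    ← map_cfc_of_isHermitian φ huv (hφ huv), ← map_smul, ← map_smul, ← map_add, ← map_sub] at key
  exact (posSemidef_submatrix_equiv _).1 key

theorem posSemidef_conj_cfc_sub_cfc_conj_of_isometry (hf : OperatorConvexOn I f)
    {Y : Matrix ι ι ℂ} (hY : Y.IsHermitian) (hYI : spectrum ℝ Y ⊆ I) {W : Matrix ι κ ℂ}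
    (hW : Wᴴ * W = 1) : (Wᴴ * cfc f Y * W - cfc f (Wᴴ * Y * W)).PosSemidef := by
  set P := W * Wᴴ
  have hPW : P * W = W := by rw [Matrix.mul_assoc, hW, Matrix.mul_one]
  have hPP : P * P = P := by rw [← Matrix.mul_assoc, hPW]
  set S : Matrix ι ι ℂ := 1 - P - P
  have hSH : Sᴴ = S := by simp [S, P]
  have hSW : S * W = -W := by simp only [S, Matrix.sub_mul, hPW, Matrix.one_mul]; abel
  have hWS : Wᴴ * S = -Wᴴ := by simpa [hSH] using congrArg conjTranspose hSW
  have hSS : S * S = 1 := by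
    simp only [S, Matrix.sub_mul, Matrix.mul_sub, hPP, Matrix.one_mul, Matrix.mul_one]; abel
  have hSY : (S * Y * S).IsHermitian := by
    simpa [hSH] using isHermitian_conjTranspose_mul_mul S hY
  set M := (1 / 2 : ℝ) • Y + (1 - 1 / 2 : ℝ) • (S * Y * S)
  have hM : M.IsHermitian := (hY.smul (IsSelfAdjoint.all _)).add (hSY.smul (IsSelfAdjoint.all _))
  have hMW : M * W = W * (Wᴴ * Y * W) := by
    simp only [M, S, P, Matrix.add_mul, Matrix.smul_mul, Matrix.sub_mul, Matrix.mul_sub,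
      Matrix.mul_assoc, Matrix.one_mul, Matrix.mul_one, hW]
    module
  have hconv := (hf.posSemidef_smul_cfc_add_smul_cfc_sub_cfc hY hSY hYI
    ((spectrum_conj_of_involution hSH hSS Y).symm ▸ hYI) (t := 1 / 2) (by norm_num))
  convert hconv.conjTranspose_mul_mul_same W using 1
  rw [cfc_conj_of_involution hSH hSS hY, Matrix.mul_sub, Matrix.sub_mul,
    Matrix.mul_assoc Wᴴ (cfc f M) W,
    cfc_mul_eq_mul_cfc hM (isHermitian_conjTranspose_mul_mul W hY) hMW f,
    ← Matrix.mul_assoc, hW, Matrix.one_mul]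
  simp only [Matrix.mul_add, Matrix.add_mul, Matrix.mul_smul, Matrix.smul_mul, Matrix.mul_assoc]
  rw [hSW, ← Matrix.mul_assoc Wᴴ S, hWS, Matrix.neg_mul, Matrix.mul_neg, Matrix.mul_neg, neg_neg]
  module

theorem posSemidef_conj_cfc_sub_cfc_conj (hf : OperatorConvexOn I f) (h0 : (0 : ℝ) ∈ I)
    (hf0 : f 0 ≤ 0) {X : Matrix ι ι ℂ} (hX : X.IsHermitian) (hXI : spectrum ℝ X ⊆ I)
    {V : Matrix ι κ ℂ} (hV : (1 - Vᴴ * V).PosSemidef) :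
    (Vᴴ * cfc f X * V - cfc f (Vᴴ * X * V)).PosSemidef := by
  obtain ⟨T, hT⟩ : ∃ T : Matrix κ κ ℂ, 1 - Vᴴ * V = Tᴴ * T := by
    open scoped MatrixOrder in exact CStarAlgebra.nonneg_iff_eq_star_mul_self.mp hV.nonneg
  set W := fromRows V T
  set Y : Matrix (ι ⊕ κ) (ι ⊕ κ) ℂ := fromBlocks X 0 0 0
  have hW : Wᴴ * W = 1 := by
    rw [conjTranspose_fromRows_eq_fromCols_conjTranspose, fromCols_mul_fromRows,
      ← hT, add_sub_cancel]
  have hY : Y.IsHermitian := by simp [Y, IsHermitian, fromBlocks_conjTranspose, hX.eq]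
  have hYI : spectrum ℝ Y ⊆ I := by
    rw [spectrum_fromBlocks_zero]
    exact Set.union_subset hXI (spectrum_zero_subset.trans (Set.singleton_subset_iff.2 h0))
  have hWYW : Wᴴ * Y * W = Vᴴ * X * V := by
    simp [W, Y, Matrix.mul_assoc, fromBlocks_mul_fromRows,
      conjTranspose_fromRows_eq_fromCols_conjTranspose, fromCols_mul_fromRows]
  have hWfYW : Wᴴ * cfc f Y * W = Vᴴ * cfc f X * V + f 0 • (Tᴴ * T) := by
    rw [cfc_fromBlocks_zero hX isHermitian_zero, cfc_apply_zero, Algebra.algebraMap_eq_smul_one]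
    simp [W, Matrix.mul_assoc, fromBlocks_mul_fromRows,
      conjTranspose_fromRows_eq_fromCols_conjTranspose, fromCols_mul_fromRows]
  have key := hf.posSemidef_conj_cfc_sub_cfc_conj_of_isometry hY hYI hW
  rw [hWYW, hWfYW] at key
  have hT0 : ((-f 0) • (Tᴴ * T)).PosSemidef :=
    (posSemidef_conjTranspose_mul_self T).smul (neg_nonneg.2 hf0)
  convert key.add hT0 using 1
  module

end OperatorConvexOn

end

section PartialTrace

variable {n m : ℕ}

theorem tensorOne_eq_kronecker (A : Matrix (Fin n) (Fin n) ℂ) :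
    tensorOne (m := m) A = A ⊗ₖ 1 := by
  ext p q
  simp [tensorOne, one_apply]

theorem tensorOne_mul_tensorOne (A B : Matrix (Fin n) (Fin n) ℂ) :
    tensorOne (m := m) A * tensorOne B = tensorOne (A * B) := by
  simp only [tensorOne_eq_kronecker, ← mul_kronecker_mul, Matrix.one_mul]

theorem ptrace1_tensorOne_mul (A : Matrix (Fin n) (Fin n) ℂ)
    (X : Matrix (Fin n × Fin m) (Fin n × Fin m) ℂ) :
    ptrace1 (tensorOne A * X) = ptrace1 (X * tensorOne A) := by
  ext j l
  simp only [ptrace1, tensorOne, mul_ite, mul_one, mul_zero, mul_apply, of_apply, ite_mul,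
    zero_mul, Fintype.sum_prod_type, Finset.sum_ite_eq, Finset.mem_univ, ↓reduceIte,
    Finset.sum_ite_eq']
  rw [Finset.sum_comm]
  exact Finset.sum_congr rfl fun _ _ => Finset.sum_congr rfl fun _ _ => mul_comm _ _

theorem ptrace1_tensorOne_mul_mul_tensorOne (A B : Matrix (Fin n) (Fin n) ℂ)
    (X : Matrix (Fin n × Fin m) (Fin n × Fin m) ℂ) :
    ptrace1 (tensorOne B * X * tensorOne A) = ptrace1 (X * tensorOne (A * B)) := by
  rw [Matrix.mul_assoc, ptrace1_tensorOne_mul, Matrix.mul_assoc, tensorOne_mul_tensorOne]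

theorem ptrace1_tensorOne (E : Matrix (Fin n) (Fin n) ℂ) :
    ptrace1 (tensorOne (m := m) E) = E.trace • 1 := by
  ext j l
  simp [ptrace1, tensorOne, trace, one_apply]

theorem trace_mul_ptrace1 (B : Matrix (Fin m) (Fin m) ℂ)
    (X : Matrix (Fin n × Fin m) (Fin n × Fin m) ℂ) :
    (B * ptrace1 X).trace = (oneTensor B * X).trace := by
  simp only [trace, ptrace1, diag_apply, mul_apply, of_apply, Finset.mul_sum, oneTensor, ite_mul,
    one_mul, zero_mul, Fintype.sum_prod_type, Finset.sum_ite_irrel, Finset.sum_const_zero,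
    Finset.sum_ite_eq, Finset.mem_univ, ↓reduceIte]
  exact (Finset.sum_congr rfl fun _ _ => Finset.sum_comm).trans Finset.sum_comm

theorem trace_ptrace2 (X : Matrix (Fin n × Fin m) (Fin n × Fin m) ℂ) :
    (ptrace2 X).trace = X.trace := by
  simp [ptrace2, trace, Fintype.sum_prod_type]

theorem ptrace2_tensorOne_mul (A : Matrix (Fin n) (Fin n) ℂ)
    (X : Matrix (Fin n × Fin m) (Fin n × Fin m) ℂ) :
    ptrace2 (tensorOne A * X) = A * ptrace2 X := by
  ext i k
  simp only [ptrace2, tensorOne, mul_ite, mul_one, mul_zero, mul_apply, of_apply, ite_mul,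
    zero_mul, Fintype.sum_prod_type, Finset.sum_ite_eq, Finset.mem_univ, ↓reduceIte,
    Finset.mul_sum]
  exact Finset.sum_comm

theorem trace_mul_ptrace1_mul_tensorOne (B : Matrix (Fin m) (Fin m) ℂ)
    (E : Matrix (Fin n) (Fin n) ℂ) (X : Matrix (Fin n × Fin m) (Fin n × Fin m) ℂ) :
    (B * ptrace1 (X * tensorOne E)).trace = (E * ptrace2 (oneTensor B * X)).trace := by
  rw [trace_mul_ptrace1, ← Matrix.mul_assoc, trace_mul_comm, ← trace_ptrace2,
    ptrace2_tensorOne_mul]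

/-- `y ↦ ∑ₖ g eₖ ⊗ y ⊗ eₖ`: the maps `y ↦ g eₖ ⊗ y` stacked into one column. -/
def stackTensorOne (g : Matrix (Fin n) (Fin n) ℂ) :
    Matrix ((Fin n × Fin m) × Fin n) (Fin m) ℂ :=
  of fun q l => g q.1.1 q.2 * if q.1.2 = l then 1 else 0

theorem conjTranspose_stackTensorOne_mul_kronecker_one_mul (g : Matrix (Fin n) (Fin n) ℂ)
    (X : Matrix (Fin n × Fin m) (Fin n × Fin m) ℂ) :
    (stackTensorOne (m := m) g)ᴴ * (X ⊗ₖ (1 : Matrix (Fin n) (Fin n) ℂ)) *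
      stackTensorOne (m := m) g = ptrace1 (X * tensorOne (g * gᴴ)) := by
  ext j l
  simp only [stackTensorOne, apply_ite, mul_one, mul_zero, mul_apply, conjTranspose_apply,
    of_apply, RCLike.star_def, star_zero, kroneckerMap_apply, one_apply, ite_mul, zero_mul,
    Fintype.sum_prod_type, Finset.sum_ite_eq', Finset.mem_univ, ↓reduceIte, Finset.sum_mul,
    Finset.sum_ite_irrel, Finset.sum_const_zero, ptrace1, tensorOne, Finset.mul_sum]
  refine ((Finset.sum_congr rfl fun _ _ => Finset.sum_comm).trans Finset.sum_comm).trans ?_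
  exact Finset.sum_congr rfl fun _ _ => Finset.sum_congr rfl fun _ _ =>
    Finset.sum_congr rfl fun _ _ => by ring

theorem conjTranspose_stackTensorOne_mul_self (g : Matrix (Fin n) (Fin n) ℂ) :
    (stackTensorOne (m := m) g)ᴴ * stackTensorOne (m := m) g = (g * gᴴ).trace • 1 := by
  simpa [one_kronecker_one, ptrace1_tensorOne] using
    conjTranspose_stackTensorOne_mul_kronecker_one_mul (m := m) g 1

theorem posSemidef_one_sub_conjTranspose_stackTensorOne_mul_self {g : Matrix (Fin n) (Fin n) ℂ}
    (hg : (g * gᴴ).trace ≤ 1) :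
    (1 - (stackTensorOne (m := m) g)ᴴ * stackTensorOne (m := m) g).PosSemidef := by
  rw [conjTranspose_stackTensorOne_mul_self, ← one_smul ℂ (1 : Matrix (Fin m) (Fin m) ℂ),
    smul_smul, mul_one, ← sub_smul]
  exact PosSemidef.one.smul (sub_nonneg.2 hg)

end PartialTrace

theorem jensen_slice_maps_states_general {n m : ℕ}
    {d₁ : Matrix (Fin n) (Fin n) ℂ} (hd₁ : d₁.PosDef) (hd₁tr : d₁.trace = 1)
    {d₂ : Matrix (Fin m) (Fin m) ℂ} (hd₂ : d₂.PosDef)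
    (a : Matrix (Fin n) (Fin n) ℂ) (ha : (1 - aᴴ * a).PosSemidef)
    (I : Set ℝ) (hI : I.OrdConnected) (h0I : (0 : ℝ) ∈ I)
    (f : ℝ → ℝ) (hf0 : f 0 ≤ 0)
    (hopconv : ∀ (k : ℕ), 1 ≤ k → ∀ {u v : Matrix (Fin k) (Fin k) ℂ}
      (hu : u.IsHermitian) (hv : v.IsHermitian),
      (∀ i, hu.eigenvalues i ∈ I) → (∀ i, hv.eigenvalues i ∈ I) →
      ∀ t : ℝ, t ∈ Set.Icc (0 : ℝ) 1 → ∀ (huv : (t • u + (1 - t) • v).IsHermitian),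
        (t • matFun hu f + (1 - t) • matFun hv f - matFun huv f).PosSemidef)
    {H : Matrix (Fin n × Fin m) (Fin n × Fin m) ℂ} (hH : H.IsHermitian)
    (hspec : ∀ i, hH.eigenvalues i ∈ I) :
    ∃ hK : (ptrace1 (tensorOne d₁ * tensorOne aᴴ * H * tensorOne a)).IsHermitian,
      (∀ j, hK.eigenvalues j ∈ I) ∧
        (d₂ * matFun hK f).trace ≤
          (d₁ * aᴴ * ptrace2 (oneTensor d₂ * matFun hH f) * a).trace := by
  obtain ⟨C, hC⟩ : ∃ C : Matrix (Fin n) (Fin n) ℂ, d₁ = Cᴴ * C := by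
    open scoped MatrixOrder in
    exact CStarAlgebra.nonneg_iff_eq_star_mul_self.mp hd₁.posSemidef.nonneg
  have hg : a * Cᴴ * (a * Cᴴ)ᴴ = a * d₁ * aᴴ := by simp [hC, Matrix.mul_assoc]
  set V := stackTensorOne (m := m) (a * Cᴴ)
  set X := H ⊗ₖ (1 : Matrix (Fin n) (Fin n) ℂ)
  have hX : X.IsHermitian := hH.kronecker_one
  have hK : ptrace1 (tensorOne d₁ * tensorOne aᴴ * H * tensorOne a) = Vᴴ * X * V := by
    rw [conjTranspose_stackTensorOne_mul_kronecker_one_mul, hg, tensorOne_mul_tensorOne,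
      ptrace1_tensorOne_mul_mul_tensorOne, Matrix.mul_assoc]
  have hV : (1 - Vᴴ * V).PosSemidef := posSemidef_one_sub_conjTranspose_stackTensorOne_mul_self
    (hg ▸ hd₁tr ▸ hd₁.posSemidef.trace_mul_mul_conjTranspose_le ha)
  have hHI := hH.forall_eigenvalues_mem_iff.1 hspec
  have hXH : spectrum ℝ X ⊆ spectrum ℝ H := spectrum_kronecker_one_subset H
  obtain ⟨α, β, hα, hβ, hHαβ, hαβI⟩ := hI.exists_Icc_subset h0I H.finite_real_spectrum hHI
  have hKH : (ptrace1 (tensorOne d₁ * tensorOne aᴴ * H * tensorOne a)).IsHermitian :=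
    hK ▸ isHermitian_conjTranspose_mul_mul V hX
  refine ⟨hKH, hKH.forall_eigenvalues_mem_iff.2 (hK ▸ ?_), ?_⟩
  · exact (spectrum_conjTranspose_mul_mul_subset_Icc hX hα hβ (hXH.trans hHαβ) hV).trans hαβI
  rw [hKH.matFun_eq_cfc, hH.matFun_eq_cfc, hK]
  have hJensen := OperatorConvexOn.posSemidef_conj_cfc_sub_cfc_conj hopconv h0I hf0 hX
    (hXH.trans hHI) hV
  refine (hd₂.posSemidef.trace_mul_le_trace_mul hJensen).trans_eq ?_
  rw [hH.cfc_kronecker_one, conjTranspose_stackTensorOne_mul_kronecker_one_mul, hg,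
    trace_mul_ptrace1_mul_tensorOne, trace_mul_comm _ a]
  simp only [Matrix.mul_assoc]

/-- **Jensen's inequality for slice maps of faithful states (non-tracial case).**
Let `d₁, d₂` be positive definite matrices of trace `1` (the densities of faithful states
`ρᵢ = Tr(dᵢ ·)`), let `a` be a contraction (`a* a ≤ 1`), let `I` be an interval containing `0`,
and let `f` be operator convex on `I` with `f(0) ≤ 0` (meaning: for all `k ≥ 1`, Hermitian
`k×k` matrices `u, v` with eigenvalues in `I` and `t ∈ [0,1]`, one has
`f(t•u + (1-t)•v) ≤ t•f(u) + (1-t)•f(v)` in the Loewner order). If `H` is Hermitian on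
`ℂⁿ ⊗ ℂᵐ` with all eigenvalues in `I`, then `K = Tr₁((d₁ ⊗ 1)(a* ⊗ 1) H (a ⊗ 1))` is Hermitian
with all eigenvalues in `I`, and `Tr(d₂ f(K)) ≤ Tr(d₁ a* Tr₂((1 ⊗ d₂) f(H)) a)`. -/
theorem jensen_slice_maps_states {n m : ℕ} (hn : 1 ≤ n) (hm : 1 ≤ m)
    {d₁ : Matrix (Fin n) (Fin n) ℂ} (hd₁ : d₁.PosDef) (hd₁tr : d₁.trace = 1)
    {d₂ : Matrix (Fin m) (Fin m) ℂ} (hd₂ : d₂.PosDef) (hd₂tr : d₂.trace = 1)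
    (a : Matrix (Fin n) (Fin n) ℂ) (ha : (1 - aᴴ * a).PosSemidef)
    (I : Set ℝ) (hI : I.OrdConnected) (h0I : (0 : ℝ) ∈ I)
    (f : ℝ → ℝ) (hf0 : f 0 ≤ 0)
    (hopconv : ∀ (k : ℕ), 1 ≤ k → ∀ {u v : Matrix (Fin k) (Fin k) ℂ}
      (hu : u.IsHermitian) (hv : v.IsHermitian),
      (∀ i, hu.eigenvalues i ∈ I) → (∀ i, hv.eigenvalues i ∈ I) →
      ∀ t : ℝ, t ∈ Set.Icc (0 : ℝ) 1 → ∀ (huv : (t • u + (1 - t) • v).IsHermitian),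
        (t • matFun hu f + (1 - t) • matFun hv f - matFun huv f).PosSemidef)
    {H : Matrix (Fin n × Fin m) (Fin n × Fin m) ℂ} (hH : H.IsHermitian)
    (hspec : ∀ i, hH.eigenvalues i ∈ I) :
    ∃ hK : (ptrace1 (tensorOne d₁ * tensorOne aᴴ * H * tensorOne a)).IsHermitian,
      (∀ j, hK.eigenvalues j ∈ I) ∧
        (d₂ * matFun hK f).trace ≤
          (d₁ * aᴴ * ptrace2 (oneTensor d₂ * matFun hH f) * a).trace :=
  jensen_slice_maps_states_general hd₁ hd₁tr hd₂ a ha I hI h0I f hf0 hopconv hH hspec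
end
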